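/- arXiv:1912.00211 — 6 statements merged into one kernel-verified Lean document; each statement's English description precedes it below -/
import Mathlib

section
/- Let I be a finite nonempty set of players, and for each i ∈ I let S i be a nonempty compact topological space and u i : (Π j, S j) → ℝ a continuous utility function. Then for every player i, the value function v i : (Π j, S j) → ℝ, defined by v i p = inf {u i q | q ∈ B₋ᵢ p}, is upper semicontinuous on the product space Π j, S j. -/
/-- The deviation set `B₋ᵢ p`: profiles `q` with `q i = p i` and, for every `j ≠ i`,
either `q j = p j` or `q j` is a better response of player `j` at `p`. -/
def Dev {I : Type*} [DecidableEq I] {S : I → Type*}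
    (u : ∀ i : I, (∀ j, S j) → ℝ) (i : I) (p : ∀ j, S j) : Set (∀ j, S j) :=
  {q | q i = p i ∧ ∀ j, j ≠ i → (q j = p j ∨ u j (Function.update p j (q j)) > u j p)}

/-- The value of a profile `p` to player `i`: the infimum of `u i` over the deviation set. -/
noncomputable def val {I : Type*} [DecidableEq I] {S : I → Type*}
    (u : ∀ i : I, (∀ j, S j) → ℝ) (i : I) (p : ∀ j, S j) : ℝ :=
  sInf (u i '' Dev u i p)

/-!
Fix `p` and a profile `q ∈ B₋ᵢ p` with `u i q < c`. For `p'` near `p`, let every player who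
deviates in `q` play its `q`-strategy against `p'` while the others keep `p'`. This is continuous
in `p'` and equals `q` at `p`, so `u i` stays below `c` nearby; and since the finitely many strict
better-response inequalities at `p` persist near `p`, it lies in `B₋ᵢ p'`, whence `v i p' < c`.
Compactness only makes `u i` bounded below, so that `val` is a genuine infimum.
-/

open Filter Topology

section CopyDeviations

variable {I : Type*} {S : I → Type*}

open Classical in
noncomputable def copyDeviations (p q p' : ∀ j, S j) : ∀ j, S j :=
  fun j => if q j = p j then p' j else q j

theorem copyDeviations_self (p q : ∀ j, S j) : copyDeviations p q p = q := by
  funext j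
  by_cases h : q j = p j <;> simp [copyDeviations, h]

variable [∀ j, TopologicalSpace (S j)] in
theorem continuous_copyDeviations (p q : ∀ j, S j) : Continuous (copyDeviations p q) := by
  refine continuous_pi fun j => ?_
  by_cases h : q j = p j
  · simpa [copyDeviations, h] using continuous_apply j
  · simpa [copyDeviations, h] using continuous_const

end CopyDeviations

section Deviation

variable {I : Type*} [DecidableEq I] {S : I → Type*}

theorem mem_dev_self (u : I → (∀ j, S j) → ℝ) (i : I) (p : ∀ j, S j) : p ∈ Dev u i p :=
  ⟨rfl, fun _ _ => Or.inl rfl⟩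

theorem val_le {u : I → (∀ j, S j) → ℝ} {i : I} (hb : BddBelow (Set.range (u i)))
    {p q : ∀ j, S j} (hq : q ∈ Dev u i p) : val u i p ≤ u i q :=
  csInf_le (hb.mono (Set.image_subset_range _ _)) ⟨q, hq, rfl⟩

theorem exists_mem_dev_lt_of_val_lt {u : I → (∀ j, S j) → ℝ} {i : I}
    (hb : BddBelow (Set.range (u i))) {p : ∀ j, S j} {c : ℝ} (hc : val u i p < c) :
    ∃ q ∈ Dev u i p, u i q < c := by
  rw [val, csInf_lt_iff (hb.mono (Set.image_subset_range _ _))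
    ⟨_, p, mem_dev_self u i p, rfl⟩] at hc
  obtain ⟨_, ⟨q, hq, rfl⟩, hqc⟩ := hc
  exact ⟨q, hq, hqc⟩

variable [∀ j, TopologicalSpace (S j)]

theorem eventually_lt_update {f : (∀ j, S j) → ℝ} (hf : Continuous f) {p : ∀ j, S j} {j : I}
    {x : S j} (h : f p < f (Function.update p j x)) :
    ∀ᶠ p' in 𝓝 p, f p' < f (Function.update p' j x) :=
  hf.continuousAt.eventually_lt
    (hf.comp (continuous_id.update j continuous_const)).continuousAt h

theorem eventually_copyDeviations_mem_dev [Finite I] {u : I → (∀ j, S j) → ℝ}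
    (hu : ∀ j, Continuous (u j)) {i : I} {p q : ∀ j, S j} (hq : q ∈ Dev u i p) :
    ∀ᶠ p' in 𝓝 p, copyDeviations p q p' ∈ Dev u i p' := by
  have hbetter : ∀ᶠ p' in 𝓝 p, ∀ j, j ≠ i → q j ≠ p j →
      u j p' < u j (Function.update p' j (q j)) := by
    refine eventually_all.2 fun j => ?_
    by_cases hj : j ≠ i ∧ q j ≠ p j
    · have hlt := (hq.2 j hj.1).resolve_left hj.2
      filter_upwards [eventually_lt_update (hu j) hlt] with p' hp' _ _ using hp'
    · exact Eventually.of_forall fun _ hji hqj => absurd ⟨hji, hqj⟩ hj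
  filter_upwards [hbetter] with p' hp'
  refine ⟨by simp [copyDeviations, hq.1], fun j hj => ?_⟩
  by_cases hqj : q j = p j
  · exact Or.inl (by simp [copyDeviations, hqj])
  · exact Or.inr (by simpa [copyDeviations, hqj] using hp' j hj hqj)

end Deviation

theorem value_upperSemicontinuous_general {I : Type*} [Fintype I] [DecidableEq I]
    {S : I → Type*} [∀ i, TopologicalSpace (S i)] [∀ i, CompactSpace (S i)]
    (u : ∀ i : I, (∀ j, S j) → ℝ) (hu : ∀ i, Continuous (u i)) (i : I) :
    UpperSemicontinuous (val u i) := by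
  have hb : BddBelow (Set.range (u i)) := (isCompact_range (hu i)).bddBelow
  intro p c hc
  obtain ⟨q, hq, hqc⟩ := exists_mem_dev_lt_of_val_lt hb hc
  have hnear : ∀ᶠ p' in 𝓝 p, u i (copyDeviations p q p') < c :=
    ((hu i).comp (continuous_copyDeviations p q)).continuousAt.eventually_lt continuousAt_const
      (by rwa [Function.comp_apply, copyDeviations_self])
  filter_upwards [hnear, eventually_copyDeviations_mem_dev hu hq] with p' hlt hmem
  exact (val_le hb hmem).trans_lt hlt

/-- The value function of each player is upper semicontinuous. -/
theorem value_upperSemicontinuous {I : Type*} [Fintype I] [Nonempty I] [DecidableEq I]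
    {S : I → Type*} [∀ i, TopologicalSpace (S i)] [∀ i, CompactSpace (S i)]
    [∀ i, Nonempty (S i)]
    (u : ∀ i : I, (∀ j, S j) → ℝ) (hu : ∀ i, Continuous (u i)) (i : I) :
    UpperSemicontinuous (val u i) :=
  value_upperSemicontinuous_general u hu i
end

section
/- Let I be a finite nonempty set of players, and for each i ∈ I let S i be a nonempty compact topological space and u i : (Π j, S j) → ℝ a continuous utility function. Then the game has an optimin point: there exists a profile p̄ such that there is no profile p with v i p ≥ v i p̄ for all i ∈ I and v j p > v j p̄ for some j ∈ I. -/
open Filter Topology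

lemma not_dominated_of_forall_sum_le {ι α : Type*} [Fintype ι] {f : ι → α → ℝ} {x : α}
    (hx : ∀ y, ∑ i, f i y ≤ ∑ i, f i x) :
    ¬ ∃ y, (∀ i, f i x ≤ f i y) ∧ ∃ j, f j x < f j y := by
  rintro ⟨y, hle, j, hlt⟩
  exact (hx y).not_gt (Finset.sum_lt_sum (fun i _ => hle i) ⟨j, Finset.mem_univ j, hlt⟩)

section Optimin

open Classical in
noncomputable def graft {I : Type*} {S : I → Type*} (p q p' : ∀ j, S j) : ∀ j, S j :=
  fun j => if q j = p j then p' j else q j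

variable {I : Type*} {S : I → Type*}

lemma graft_self (p q : ∀ j, S j) : graft p q p = q := by
  funext j
  by_cases h : q j = p j <;> simp [graft, h]

lemma continuous_graft [∀ i, TopologicalSpace (S i)] (p q : ∀ j, S j) :
    Continuous (graft p q) := by
  refine continuous_pi fun j => ?_
  by_cases h : q j = p j
  · simpa [graft, h] using continuous_apply j
  · simpa [graft, h] using continuous_const

variable [DecidableEq I] (u : I → (∀ j, S j) → ℝ)

lemma self_mem_Dev (i : I) (p : ∀ j, S j) : p ∈ Dev u i p :=
  ⟨rfl, fun _ _ => Or.inl rfl⟩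

lemma eventually_graft_mem_Dev [Finite I] [∀ i, TopologicalSpace (S i)]
    (hu : ∀ i, Continuous (u i)) {i : I} {p q : ∀ j, S j} (hq : q ∈ Dev u i p) :
    ∀ᶠ p' in 𝓝 p, graft p q p' ∈ Dev u i p' := by
  have hdev : ∀ j, ∀ᶠ p' in 𝓝 p, j ≠ i →
      graft p q p' j = p' j ∨ u j (Function.update p' j (graft p q p' j)) > u j p' := by
    intro j
    by_cases hj : q j = p j
    · exact Eventually.of_forall fun p' _ => Or.inl (by simp [graft, hj])
    · have hji : j ≠ i := fun h => hj (h ▸ hq.1)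
      have hgain : u j p < u j (Function.update p j (q j)) := (hq.2 j hji).resolve_left hj
      have hopen : IsOpen {p' | u j p' < u j (Function.update p' j (q j))} :=
        isOpen_lt (hu j) ((hu j).comp (continuous_id.update j continuous_const))
      filter_upwards [hopen.mem_nhds hgain] with p' hp' _
      exact Or.inr (by simpa [graft, hj] using hp')
  filter_upwards [eventually_all.2 hdev] with p' hp'
  exact ⟨by simp [graft, hq.1], fun j hji => hp' j hji⟩

variable [∀ i, TopologicalSpace (S i)] [∀ i, CompactSpace (S i)]

lemma val_le_of_mem_Dev {i : I} (hu : Continuous (u i)) {p q : ∀ j, S j}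
    (hq : q ∈ Dev u i p) : val u i p ≤ u i q :=
  csInf_le ((isCompact_range hu).bddBelow.mono (Set.image_subset_range _ _)) ⟨q, hq, rfl⟩

lemma upperSemicontinuous_val [Finite I] (hu : ∀ i, Continuous (u i)) (i : I) :
    UpperSemicontinuous (val u i) := by
  intro p y hy
  obtain ⟨_, ⟨q, hq, rfl⟩, hqy⟩ :=
    exists_lt_of_csInf_lt ((Set.nonempty_of_mem (self_mem_Dev u i p)).image (u i)) hy
  have hnear : ∀ᶠ p' in 𝓝 p, u i (graft p q p') < y := by
    have hgraft : Tendsto (graft p q) (𝓝 p) (𝓝 q) := by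
      simpa only [graft_self] using (continuous_graft p q).tendsto p
    exact (((hu i).tendsto q).comp hgraft).eventually (gt_mem_nhds hqy)
  filter_upwards [eventually_graft_mem_Dev u hu hq, hnear] with p' hdev hlt
  exact (val_le_of_mem_Dev u (hu i) hdev).trans_lt hlt

end Optimin

theorem exists_optimin_general {I : Type*} [Fintype I] [DecidableEq I]
    {S : I → Type*} [∀ i, TopologicalSpace (S i)] [∀ i, CompactSpace (S i)]
    [∀ i, Nonempty (S i)]
    (u : ∀ i : I, (∀ j, S j) → ℝ) (hu : ∀ i, Continuous (u i)) :
    ∃ pbar : ∀ j, S j, ¬ ∃ p : ∀ j, S j,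
      (∀ i, val u i pbar ≤ val u i p) ∧ ∃ j, val u j pbar < val u j p := by
  have husc : UpperSemicontinuous fun p => ∑ i, val u i p :=
    upperSemicontinuous_sum fun i _ => upperSemicontinuous_val u hu i
  obtain ⟨pbar, -, hmax⟩ :=
    (husc.upperSemicontinuousOn _).exists_isMaxOn Set.univ_nonempty isCompact_univ
  exact ⟨pbar, not_dominated_of_forall_sum_le fun p => hmax (Set.mem_univ p)⟩

/-- Every game with compact strategy spaces and continuous utilities has an optimin point. -/
theorem exists_optimin {I : Type*} [Fintype I] [Nonempty I] [DecidableEq I]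
    {S : I → Type*} [∀ i, TopologicalSpace (S i)] [∀ i, CompactSpace (S i)]
    [∀ i, Nonempty (S i)]
    (u : ∀ i : I, (∀ j, S j) → ℝ) (hu : ∀ i, Continuous (u i)) :
    ∃ pbar : ∀ j, S j, ¬ ∃ p : ∀ j, S j,
      (∀ i, val u i pbar ≤ val u i p) ∧ ∃ j, val u j pbar < val u j p :=
  exists_optimin_general u hu
end

section
/- Every finite game restricted to pure strategies has an optimin point in pure strategies: let I be a finite nonempty set of players and, for each i ∈ I, let S i be a finite nonempty strategy set and u i : (Π j, S j) → ℝ a utility function. Then there exists a profile p̄ such that there is no profile p with v i p ≥ v i p̄ for all i ∈ I and v j p > v j p̄ for some j ∈ I. -/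
/-! There are finitely many pure profiles, so their value vectors form a finite nonempty subset
of `I → ℝ` under the componentwise (Pareto) order, and any maximal element of it is an
optimin point. -/

theorem Finite.exists_forall_not_lt {α β : Type*} [Finite α] [Nonempty α] [Preorder β]
    (f : α → β) : ∃ x, ∀ y, ¬ f x < f y := by
  obtain ⟨x, -, hx⟩ := Set.finite_univ.exists_maximalFor f Set.univ Set.univ_nonempty
  exact ⟨x, fun y hlt => hlt.not_ge (hx (Set.mem_univ y) hlt.le)⟩

theorem exists_optimin_pure_general {I : Type*} [Fintype I] [DecidableEq I]
    {S : I → Type*} [∀ i, Fintype (S i)] [∀ i, Nonempty (S i)]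
    (u : ∀ i : I, (∀ j, S j) → ℝ) :
    ∃ pbar : ∀ j, S j, ¬ ∃ p : ∀ j, S j,
      (∀ i, val u i pbar ≤ val u i p) ∧ ∃ j, val u j pbar < val u j p := by
  obtain ⟨pbar, hpbar⟩ := Finite.exists_forall_not_lt fun p : ∀ j, S j => fun i => val u i p
  exact ⟨pbar, fun ⟨p, hle, hlt⟩ => hpbar p (Pi.lt_def.2 ⟨hle, hlt⟩)⟩

/-- Every finite game restricted to pure strategies has an optimin point in pure strategies. -/
theorem exists_optimin_pure {I : Type*} [Fintype I] [Nonempty I] [DecidableEq I]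
    {S : I → Type*} [∀ i, Fintype (S i)] [∀ i, Nonempty (S i)]
    (u : ∀ i : I, (∀ j, S j) → ℝ) :
    ∃ pbar : ∀ j, S j, ¬ ∃ p : ∀ j, S j,
      (∀ i, val u i pbar ≤ val u i p) ∧ ∃ j, val u j pbar < val u j p :=
  exists_optimin_pure_general u
end

section
/- There exists an optimin point in every cooperative game in characteristic function form: for every finite nonempty player set N and every cohesive characteristic function u : Finset N → ℝ with u ∅ = 0, there exists a feasible payoff vector x : N → ℝ such that the vector (V i x)_{i ∈ N} is Pareto optimal among the value vectors of feasible payoff vectors, i.e. there is no feasible x' with V i x' ≥ V i x for all i ∈ N and V j x' > V j x for some j ∈ N. -/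
/-- The characteristic function `u` is cohesive: the worth of the grand coalition is at
least the total worth of any partition of the players into nonempty coalitions. -/
def Cohesive {N : Type*} [Fintype N] [DecidableEq N] (u : Finset N → ℝ) : Prop :=
  ∀ P : Finset (Finset N), (∀ S ∈ P, S.Nonempty) →
    ((P : Set (Finset N)).PairwiseDisjoint id) →
    P.biUnion id = Finset.univ →
    ∑ S ∈ P, u S ≤ u Finset.univ

/-- The value of a feasible payoff vector `x` to player `i`: the minimum of `x i` and of the
worst-case payoffs of `i` under profitable deviations of coalitions not containing `i`
(losses of the non-deviating coalition shared equally). -/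
noncomputable def coopVal {N : Type*} [Fintype N] [DecidableEq N]
    (u : Finset N → ℝ) (x : N → ℝ) (i : N) : ℝ :=
  sInf ({x i} ∪
    ((fun S : Finset N =>
        x i - ((∑ j ∈ Finset.univ \ S, x j) - u (Finset.univ \ S)) / (Finset.univ \ S).card) ''
      {S : Finset N | S.Nonempty ∧ i ∉ S ∧ ∑ j ∈ S, x j < u S}))

/-!
Maximise the utilitarian welfare `∑ i, coopVal u x i` over feasible payoff vectors `x`: a
maximiser is Pareto optimal, since a Pareto improvement would raise the welfare. The welfare is
upper semicontinuous because profitable deviations stay profitable under small perturbations of `x`.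
Cohesiveness bounds each value on the feasible set, `coopVal u x i ≤ u univ - u (univ \ {i})` when
`i` is not alone, so on a superlevel set of the welfare each `coopVal u x j`, and hence each
`x j ≥ coopVal u x j`, is bounded below; feasibility then bounds `x` above, and the superlevel
set is compact.
-/

open Finset Topology

section

variable {N : Type*} [Fintype N] [DecidableEq N] (u : Finset N → ℝ)

noncomputable def deviationPayoff (x : N → ℝ) (i : N) (S : Finset N) : ℝ :=
  x i - ((∑ j ∈ univ \ S, x j) - u (univ \ S)) / (univ \ S).card

noncomputable def profitableDeviations (x : N → ℝ) (i : N) : Finset (Finset N) :=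
  univ.filter fun S => S.Nonempty ∧ i ∉ S ∧ ∑ j ∈ S, x j < u S

variable {u}

theorem Cohesive.add_le (hcoh : Cohesive u) {S : Finset N} (hS : S.Nonempty)
    (hSc : (univ \ S).Nonempty) : u S + u (univ \ S) ≤ u univ := by
  have hne : S ≠ univ \ S := fun h => by
    obtain ⟨j, hj⟩ := hS
    have hj' : j ∈ univ \ S := h ▸ hj
    simp [hj] at hj'
  have := hcoh {S, univ \ S} (by simp [hS, hSc])
    (by
      rw [coe_pair, Set.PairwiseDisjoint, Set.pairwise_pair]
      exact fun _ => ⟨disjoint_sdiff, sdiff_disjoint⟩)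
    (by simp)
  rwa [sum_pair hne] at this

-- The term `x i` of `coopVal` is the payoff of the grand coalition: `(univ \ univ).card = 0` and
-- `a / 0 = 0`.
theorem deviationPayoff_univ (x : N → ℝ) (i : N) : deviationPayoff u x i univ = x i := by
  simp [deviationPayoff]

theorem coopVal_eq_inf' (x : N → ℝ) (i : N) :
    coopVal u x i = (insert univ (profitableDeviations u x i)).inf' (insert_nonempty _ _)
      (deviationPayoff u x i) := by
  rw [inf'_eq_csInf_image, coe_insert, Set.image_insert_eq, deviationPayoff_univ]
  simp only [coopVal, Set.singleton_union, profitableDeviations, coe_filter, mem_univ, true_and]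
  rfl

theorem coopVal_le_apply (x : N → ℝ) (i : N) : coopVal u x i ≤ x i := by
  rw [coopVal_eq_inf', ← deviationPayoff_univ x i]
  exact inf'_le _ (mem_insert_self _ _)

theorem coopVal_le_deviationPayoff {x : N → ℝ} {i : N} {S : Finset N} (hS : S.Nonempty)
    (hiS : i ∉ S) (hxS : ∑ j ∈ S, x j < u S) : coopVal u x i ≤ deviationPayoff u x i S := by
  rw [coopVal_eq_inf']
  exact inf'_le _ (mem_insert_of_mem (by simp [profitableDeviations, hS, hiS, hxS]))

theorem Cohesive.exists_coopVal_le (hcoh : Cohesive u) (i : N) :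
    ∃ c, ∀ x : N → ℝ, ∑ j, x j ≤ u univ → coopVal u x i ≤ c := by
  obtain hT | hT := (univ \ {i} : Finset N).eq_empty_or_nonempty
  · have huniv : (univ : Finset N) = {i} :=
      (sdiff_eq_empty_iff_subset.1 hT).antisymm (subset_univ _)
    refine ⟨u univ, fun x hx => (coopVal_le_apply x i).trans ?_⟩
    simpa [huniv] using hx
  · -- Once `x i` exceeds the bound, the other players deviate profitably and leave `i` with
    -- `u {i}`.
    refine ⟨u univ - u (univ \ {i}), fun x hx => ?_⟩
    by_contra! hlt
    have hxi := coopVal_le_apply (u := u) x i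
    have hdev : ∑ j ∈ univ \ {i}, x j < u (univ \ {i}) := by
      rw [sum_sdiff_eq_sub (subset_univ _), sum_singleton]
      linarith
    have hpay : deviationPayoff u x i (univ \ {i}) = u {i} := by
      simp [deviationPayoff, sdiff_sdiff_right_self]
    have hval :=
      coopVal_le_deviationPayoff hT (notMem_sdiff_of_mem_right (mem_singleton_self i)) hdev
    have hsplit := hcoh.add_le (singleton_nonempty i) hT
    linarith

theorem eventually_profitableDeviations_subset (z : N → ℝ) (i : N) :
    ∀ᶠ x in 𝓝 z, profitableDeviations u z i ⊆ profitableDeviations u x i := by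
  simp only [Finset.subset_iff]
  rw [Filter.eventually_all_finset]
  intro S hS
  simp only [profitableDeviations, mem_filter, mem_univ, true_and] at hS ⊢
  obtain ⟨hne, hiS, hlt⟩ := hS
  have hcont : Continuous fun x : N → ℝ => ∑ j ∈ S, x j := by fun_prop
  filter_upwards [hcont.continuousAt.eventually_lt continuousAt_const hlt] with x hx
  exact ⟨hne, hiS, hx⟩

-- Near `z`, `coopVal` is bounded above by a minimum of finitely many continuous functions, with
-- equality at `z`.
theorem upperSemicontinuous_coopVal (i : N) : UpperSemicontinuous fun x => coopVal u x i := by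
  intro z y hy
  set D := insert univ (profitableDeviations u z i)
  have hcont : Continuous fun x => D.inf' (insert_nonempty _ _) (deviationPayoff u x i) :=
    Continuous.finset_inf'_apply _ fun S _ => by unfold deviationPayoff; fun_prop
  have hlt : ∀ᶠ x in 𝓝 z, D.inf' (insert_nonempty _ _) (deviationPayoff u x i) < y :=
    hcont.continuousAt.eventually_lt continuousAt_const (by rwa [← coopVal_eq_inf'])
  filter_upwards [eventually_profitableDeviations_subset z i, hlt] with x hDx hx
  rw [coopVal_eq_inf']
  exact (inf'_mono _ (insert_subset_insert _ hDx) _).trans_lt hx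

theorem upperSemicontinuous_sum_coopVal :
    UpperSemicontinuous fun x => ∑ i, coopVal u x i :=
  upperSemicontinuous_sum fun i _ => upperSemicontinuous_coopVal i

theorem Cohesive.isCompact_feasible_sum_coopVal_ge (hcoh : Cohesive u) (σ : ℝ) :
    IsCompact {x : N → ℝ | ∑ i, x i ≤ u univ ∧ σ ≤ ∑ i, coopVal u x i} := by
  choose c hc using hcoh.exists_coopVal_le
  set K := {x : N → ℝ | ∑ i, x i ≤ u univ ∧ σ ≤ ∑ i, coopVal u x i}
  set lo : N → ℝ := fun j => σ - ∑ i ∈ univ.erase j, c i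
  have hlo : ∀ x ∈ K, lo ≤ x := by
    rintro x ⟨hx, hσ⟩ j
    have hsplit := add_sum_erase univ (fun i => coopVal u x i) (mem_univ j)
    have hothers : ∑ i ∈ univ.erase j, coopVal u x i ≤ ∑ i ∈ univ.erase j, c i :=
      sum_le_sum fun i _ => hc i x hx
    have hj := coopVal_le_apply (u := u) x j
    simp only [lo]
    linarith
  have hhi : ∀ x ∈ K, x ≤ fun j => u univ - ∑ i ∈ univ.erase j, lo i := by
    intro x hx j
    have hsplit := add_sum_erase univ x (mem_univ j)
    have hothers : ∑ i ∈ univ.erase j, lo i ≤ ∑ i ∈ univ.erase j, x i :=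
      sum_le_sum fun i _ => hlo x hx i
    linarith [hx.1]
  have hclosed : IsClosed K :=
    (isClosed_le (continuous_finsetSum univ fun i _ => continuous_apply i) continuous_const).inter
      ((upperSemicontinuous_sum_coopVal (u := u)).isClosed_preimage σ)
  exact isCompact_Icc.of_isClosed_subset hclosed fun x hx => ⟨hlo x hx, hhi x hx⟩

end

theorem exists_optimin_cooperative_general {N : Type*} [Fintype N] [DecidableEq N] [Nonempty N]
    (u : Finset N → ℝ) (hcoh : Cohesive u) :
    ∃ x : N → ℝ, (∑ i, x i ≤ u Finset.univ) ∧
      ¬ ∃ x' : N → ℝ, (∑ i, x' i ≤ u Finset.univ) ∧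
        (∀ i, coopVal u x i ≤ coopVal u x' i) ∧ ∃ j, coopVal u x j < coopVal u x' j := by
  set F : (N → ℝ) → ℝ := fun x => ∑ i, coopVal u x i
  obtain ⟨i₀⟩ := ‹Nonempty N›
  set x₀ : N → ℝ := Pi.single i₀ (u univ)
  have hx₀ : ∑ i, x₀ i = u univ := by simp [x₀]
  set K := {x : N → ℝ | ∑ i, x i ≤ u univ ∧ F x₀ ≤ F x}
  have hx₀K : x₀ ∈ K := ⟨hx₀.le, le_rfl⟩
  obtain ⟨x, ⟨hx, hx₀x⟩, hmax⟩ := UpperSemicontinuousOn.exists_isMaxOn ⟨x₀, hx₀K⟩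
    (hcoh.isCompact_feasible_sum_coopVal_ge (F x₀))
    (upperSemicontinuous_sum_coopVal.upperSemicontinuousOn K)
  refine ⟨x, hx, ?_⟩
  rintro ⟨x', hx', hle, j, hlt⟩
  have hF : F x < F x' := sum_lt_sum (fun i _ => hle i) ⟨j, mem_univ j, hlt⟩
  exact (hmax ⟨hx', hx₀x.trans hF.le⟩).not_gt hF

/-- Every cohesive TU cooperative game in characteristic function form has an optimin point:
a feasible payoff vector whose value vector is Pareto optimal among feasible vectors. -/
theorem exists_optimin_cooperative {N : Type*} [Fintype N] [DecidableEq N] [Nonempty N]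
    (u : Finset N → ℝ) (h0 : u ∅ = 0) (hcoh : Cohesive u) :
    ∃ x : N → ℝ, (∑ i, x i ≤ u Finset.univ) ∧
      ¬ ∃ x' : N → ℝ, (∑ i, x' i ≤ u Finset.univ) ∧
        (∀ i, coopVal u x i ≤ coopVal u x' i) ∧ ∃ j, coopVal u x j < coopVal u x' j :=
  exists_optimin_cooperative_general u hcoh
end

section
/- Competitive economic equilibrium satisfies the optimin criterion: let (Y i, u i, F i)_{i ∈ I} be an abstract economy with I finite and nonempty, each Y i nonempty, and each u i bounded. If ȳ is a feasible profile such that no player has a feasible profitable unilateral deviation (for every i, there is no q_i ∈ F i (ȳ₋ᵢ) with u i (q_i, ȳ₋ᵢ) > u i ȳ) and the utility vector (u i ȳ)_{i ∈ I} is Pareto optimal among feasible profiles (there is no feasible y with u i y ≥ u i ȳ for all i and u j y > u j ȳ for some j), then ȳ is an optimin point of the economy. -/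
/-- The deviation set `B₋ᵢ y` in an abstract economy. -/
def DevE {I : Type*} [DecidableEq I] {Y : I → Type*}
    (u : ∀ i : I, (∀ j, Y j) → ℝ)
    (F : ∀ i : I, (∀ j : {j : I // j ≠ i}, Y j) → Set (Y i))
    (i : I) (y : ∀ j, Y j) : Set (∀ j, Y j) :=
  {q | q i = y i ∧ ∀ j, j ≠ i →
    (q j = y j ∨
      (q j ∈ F j (fun k => y k.1) ∧ u j (Function.update y j (q j)) > u j y))}

/-- The value of a profile `y` to player `i` in an abstract economy. -/
noncomputable def valE {I : Type*} [DecidableEq I] {Y : I → Type*}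
    (u : ∀ i : I, (∀ j, Y j) → ℝ)
    (F : ∀ i : I, (∀ j : {j : I // j ≠ i}, Y j) → Set (Y i))
    (i : I) (y : ∀ j, Y j) : ℝ :=
  sInf (u i '' DevE u F i y)

/-!
At a profile from which no player has a feasible profitable deviation, every deviation set
`B₋ᵢ ȳ` is `{ȳ}`, so the value of `ȳ` to each player is its utility. Since values never exceed
utilities, a feasible profile whose value vector dominated that of `ȳ` would dominate its
utility vector too, contradicting Pareto optimality.
-/

section AbstractEconomy

variable {I : Type*} [DecidableEq I] {Y : I → Type*}
  {u : I → (∀ j, Y j) → ℝ} {F : ∀ i : I, (∀ j : {j : I // j ≠ i}, Y j) → Set (Y i)}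

theorem self_mem_devE (i : I) (y : ∀ j, Y j) : y ∈ DevE u F i y :=
  ⟨rfl, fun _ _ => Or.inl rfl⟩

theorem devE_eq_singleton {y : ∀ j, Y j}
    (hnodev : ∀ j : I, ¬ ∃ q : Y j, q ∈ F j (fun k => y k.1) ∧
      u j (Function.update y j q) > u j y) (i : I) :
    DevE u F i y = {y} := by
  refine Set.eq_singleton_iff_unique_mem.mpr ⟨self_mem_devE i y, ?_⟩
  rintro q ⟨hqi, hq⟩
  funext j
  by_cases hji : j = i
  · subst hji
    exact hqi
  · exact (hq j hji).resolve_right fun hdev => hnodev j ⟨q j, hdev⟩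

theorem valE_eq_of_devE_eq_singleton {i : I} {y : ∀ j, Y j} (h : DevE u F i y = {y}) :
    valE u F i y = u i y := by
  rw [valE, h, Set.image_singleton, csInf_singleton]

theorem valE_le {i : I} (hbdd : BddBelow (Set.range (u i))) (y : ∀ j, Y j) :
    valE u F i y ≤ u i y :=
  csInf_le (hbdd.mono (Set.image_subset_range _ _)) ⟨y, self_mem_devE i y, rfl⟩

end AbstractEconomy

theorem competitive_equilibrium_isOptimin_general {I : Type*} [DecidableEq I]
    {Y : I → Type*}
    (u : ∀ i : I, (∀ j, Y j) → ℝ) (hb : ∀ i, ∃ C : ℝ, ∀ y, |u i y| ≤ C)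
    (F : ∀ i : I, (∀ j : {j : I // j ≠ i}, Y j) → Set (Y i))
    (ybar : ∀ j, Y j)
    (hnodev : ∀ i : I, ¬ ∃ q : Y i, q ∈ F i (fun j => ybar j.1) ∧
      u i (Function.update ybar i q) > u i ybar)
    (hpareto : ¬ ∃ y : ∀ j, Y j, (∀ i, y i ∈ F i (fun j => y j.1)) ∧
      (∀ i, u i ybar ≤ u i y) ∧ ∃ j, u j ybar < u j y) :
    ¬ ∃ y : ∀ j, Y j, (∀ i, y i ∈ F i (fun j => y j.1)) ∧
      (∀ i, valE u F i ybar ≤ valE u F i y) ∧ ∃ j, valE u F j ybar < valE u F j y := by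
  have hbdd (i : I) : BddBelow (Set.range (u i)) := by
    obtain ⟨C, hC⟩ := hb i
    exact ⟨-C, Set.forall_mem_range.mpr fun y => (abs_le.mp (hC y)).1⟩
  have hval_ybar (i : I) : valE u F i ybar = u i ybar :=
    valE_eq_of_devE_eq_singleton (devE_eq_singleton hnodev i)
  rintro ⟨y, hfeas, hle, j, hlt⟩
  refine hpareto ⟨y, hfeas, fun i => ?_, j, ?_⟩
  · calc u i ybar = valE u F i ybar := (hval_ybar i).symm
      _ ≤ valE u F i y := hle i
      _ ≤ u i y := valE_le (hbdd i) y
  · calc u j ybar = valE u F j ybar := (hval_ybar j).symm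
      _ < valE u F j y := hlt
      _ ≤ u j y := valE_le (hbdd j) y

/-- A competitive equilibrium (a feasible profile with no feasible profitable unilateral
deviations whose utility vector is Pareto optimal among feasible profiles) is an optimin
point of the abstract economy. -/
theorem competitive_equilibrium_isOptimin {I : Type*} [Fintype I] [Nonempty I] [DecidableEq I]
    {Y : I → Type*} [∀ i, Nonempty (Y i)]
    (u : ∀ i : I, (∀ j, Y j) → ℝ) (hb : ∀ i, ∃ C : ℝ, ∀ y, |u i y| ≤ C)
    (F : ∀ i : I, (∀ j : {j : I // j ≠ i}, Y j) → Set (Y i))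
    (ybar : ∀ j, Y j)
    (hfeas : ∀ i, ybar i ∈ F i (fun j => ybar j.1))
    (hnodev : ∀ i : I, ¬ ∃ q : Y i, q ∈ F i (fun j => ybar j.1) ∧
      u i (Function.update ybar i q) > u i ybar)
    (hpareto : ¬ ∃ y : ∀ j, Y j, (∀ i, y i ∈ F i (fun j => y j.1)) ∧
      (∀ i, u i ybar ≤ u i y) ∧ ∃ j, u j ybar < u j y) :
    ¬ ∃ y : ∀ j, Y j, (∀ i, y i ∈ F i (fun j => y j.1)) ∧
      (∀ i, valE u F i ybar ≤ valE u F i y) ∧ ∃ j, valE u F j ybar < valE u F j y :=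
  competitive_equilibrium_isOptimin_general u hb F ybar hnodev hpareto
end

section
/- In a two-person zero-sum game, the optimin points are exactly the pairs of maximin strategies: let Y₁, Y₂ be nonempty sets, u₁ : Y₁ × Y₂ → ℝ bounded, and u₂ = −u₁. Then a profile (y₁*, y₂*) ∈ Y₁ × Y₂ is an optimin point if and only if y₁* maximizes y₁ ↦ inf {u₁ (y₁, y₂) | y₂ ∈ Y₂} over Y₁ and y₂* maximizes y₂ ↦ inf {u₂ (y₁, y₂) | y₁ ∈ Y₁} over Y₂. -/
/-! In a zero-sum game a better response of the opponent is exactly a strategy lowering one's own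
payoff, so adding the current strategy to the better-response set yields every payoff below the
current one, and the value of a profile collapses to the security level of one's own strategy.
The value vector of `(y₁, y₂)` then splits into a function of `y₁` and a function of `y₂`, and a
vector of that form is Pareto optimal exactly when both coordinates are maximal. -/

/-- The value of `(y₁, y₂)` to player 1 in a two-person game: the infimum of
`u₁ (y₁, ·)` over `{y₂} ∪ B₂ (y₁, y₂)`, where `B₂` is player 2's better-response set. -/
noncomputable def val₁ {Y₁ Y₂ : Type*} (u₁ u₂ : Y₁ × Y₂ → ℝ) (y₁ : Y₁) (y₂ : Y₂) : ℝ :=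
  sInf ((fun y₂' => u₁ (y₁, y₂')) '' insert y₂ {y₂' : Y₂ | u₂ (y₁, y₂') > u₂ (y₁, y₂)})

/-- The value of `(y₁, y₂)` to player 2, symmetrically. -/
noncomputable def val₂ {Y₁ Y₂ : Type*} (u₁ u₂ : Y₁ × Y₂ → ℝ) (y₁ : Y₁) (y₂ : Y₂) : ℝ :=
  sInf ((fun y₁' => u₂ (y₁', y₂)) '' insert y₁ {y₁' : Y₁ | u₁ (y₁', y₂) > u₁ (y₁, y₂)})

open Set

theorem csInf_image_insert_setOf_lt {α β : Type*} [ConditionallyCompleteLinearOrder α]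
    {f : β → α} (hf : BddBelow (range f)) (b : β) :
    sInf (f '' insert b {b' | f b' < f b}) = sInf (range f) := by
  have hbdd : BddBelow (f '' insert b {b' | f b' < f b}) := hf.mono (image_subset_range _ _)
  refine le_antisymm (le_csInf (range_nonempty_iff_nonempty.2 ⟨b⟩) ?_)
    (csInf_le_csInf hf ⟨f b, mem_image_of_mem f (mem_insert b _)⟩ (image_subset_range _ _))
  rintro _ ⟨b', rfl⟩
  by_cases hlt : f b' < f b
  · exact csInf_le hbdd ⟨b', Or.inr hlt, rfl⟩
  · exact (csInf_le hbdd ⟨b, mem_insert b _, rfl⟩).trans (not_lt.1 hlt)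

section ZeroSum

variable {Y₁ Y₂ : Type*} {u₁ u₂ : Y₁ × Y₂ → ℝ}

theorem val₁_eq_sInf_range (hb : BddBelow (range u₁)) (hzs : ∀ p, u₂ p = -u₁ p)
    (y₁ : Y₁) (y₂ : Y₂) :
    val₁ u₁ u₂ y₁ y₂ = sInf (range fun y₂' => u₁ (y₁, y₂')) := by
  simp only [val₁, hzs, gt_iff_lt, neg_lt_neg_iff]
  exact csInf_image_insert_setOf_lt (hb.mono (range_comp_subset_range _ u₁)) y₂

theorem val₂_eq_sInf_range (hb : BddBelow (range u₂)) (hzs : ∀ p, u₂ p = -u₁ p)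
    (y₁ : Y₁) (y₂ : Y₂) :
    val₂ u₁ u₂ y₁ y₂ = sInf (range fun y₁' => u₂ (y₁', y₂)) := by
  have hu₁ : u₁ = fun p => -u₂ p := funext fun p => by rw [hzs, neg_neg]
  simp only [val₂, hu₁, gt_iff_lt, neg_lt_neg_iff]
  exact csInf_image_insert_setOf_lt (hb.mono (range_comp_subset_range _ u₂)) y₁

end ZeroSum

theorem not_exists_pareto_improvement_iff {α β γ : Type*} [LinearOrder γ] (a : α → γ)
    (b : β → γ) (x₀ : α) (y₀ : β) :
    (¬ ∃ x y, (a x₀ ≤ a x ∧ b y₀ ≤ b y) ∧ (a x₀ < a x ∨ b y₀ < b y)) ↔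
      (∀ x, a x ≤ a x₀) ∧ ∀ y, b y ≤ b y₀ := by
  constructor
  · intro h
    exact ⟨fun x => not_lt.1 fun hx => h ⟨x, y₀, ⟨hx.le, le_rfl⟩, Or.inl hx⟩,
      fun y => not_lt.1 fun hy => h ⟨x₀, y, ⟨le_rfl, hy.le⟩, Or.inr hy⟩⟩
  · rintro ⟨ha, hb⟩ ⟨x, y, -, hx | hy⟩
    · exact (ha x).not_gt hx
    · exact (hb y).not_gt hy

theorem zero_sum_optimin_iff_maximin_general {Y₁ Y₂ : Type*}
    (u₁ u₂ : Y₁ × Y₂ → ℝ) (hb : ∃ C : ℝ, ∀ p, |u₁ p| ≤ C)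
    (hzs : ∀ p, u₂ p = -u₁ p) (y₁s : Y₁) (y₂s : Y₂) :
    (¬ ∃ (y₁ : Y₁) (y₂ : Y₂),
        (val₁ u₁ u₂ y₁s y₂s ≤ val₁ u₁ u₂ y₁ y₂ ∧ val₂ u₁ u₂ y₁s y₂s ≤ val₂ u₁ u₂ y₁ y₂) ∧
        (val₁ u₁ u₂ y₁s y₂s < val₁ u₁ u₂ y₁ y₂ ∨ val₂ u₁ u₂ y₁s y₂s < val₂ u₁ u₂ y₁ y₂)) ↔
    ((∀ y₁ : Y₁, sInf (Set.range fun y₂ : Y₂ => u₁ (y₁, y₂)) ≤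
        sInf (Set.range fun y₂ : Y₂ => u₁ (y₁s, y₂))) ∧
     (∀ y₂ : Y₂, sInf (Set.range fun y₁ : Y₁ => u₂ (y₁, y₂)) ≤
        sInf (Set.range fun y₁ : Y₁ => u₂ (y₁, y₂s)))) := by
  obtain ⟨C, hC⟩ := hb
  have hb₁ : BddBelow (range u₁) :=
    ⟨-C, forall_mem_range.2 fun p => (abs_le.1 (hC p)).1⟩
  have hb₂ : BddBelow (range u₂) :=
    ⟨-C, forall_mem_range.2 fun p => by rw [hzs, neg_le_neg_iff]; exact (abs_le.1 (hC p)).2⟩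
  simp only [val₁_eq_sInf_range hb₁ hzs, val₂_eq_sInf_range hb₂ hzs]
  exact not_exists_pareto_improvement_iff (fun y₁ => sInf (range fun y₂ => u₁ (y₁, y₂)))
    (fun y₂ => sInf (range fun y₁ => u₂ (y₁, y₂))) y₁s y₂s

/-- In a two-person zero-sum game, a profile is an optimin point (its value vector is
Pareto optimal) iff it is a pair of maximin strategies. -/
theorem zero_sum_optimin_iff_maximin {Y₁ Y₂ : Type*} [Nonempty Y₁] [Nonempty Y₂]
    (u₁ u₂ : Y₁ × Y₂ → ℝ) (hb : ∃ C : ℝ, ∀ p, |u₁ p| ≤ C)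
    (hzs : ∀ p, u₂ p = -u₁ p) (y₁s : Y₁) (y₂s : Y₂) :
    (¬ ∃ (y₁ : Y₁) (y₂ : Y₂),
        (val₁ u₁ u₂ y₁s y₂s ≤ val₁ u₁ u₂ y₁ y₂ ∧ val₂ u₁ u₂ y₁s y₂s ≤ val₂ u₁ u₂ y₁ y₂) ∧
        (val₁ u₁ u₂ y₁s y₂s < val₁ u₁ u₂ y₁ y₂ ∨ val₂ u₁ u₂ y₁s y₂s < val₂ u₁ u₂ y₁ y₂)) ↔
    ((∀ y₁ : Y₁, sInf (Set.range fun y₂ : Y₂ => u₁ (y₁, y₂)) ≤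
        sInf (Set.range fun y₂ : Y₂ => u₁ (y₁s, y₂))) ∧
     (∀ y₂ : Y₂, sInf (Set.range fun y₁ : Y₁ => u₂ (y₁, y₂)) ≤
        sInf (Set.range fun y₁ : Y₁ => u₂ (y₁, y₂s)))) :=
  zero_sum_optimin_iff_maximin_general u₁ u₂ hb hzs y₁s y₂s
end
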